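/- Correspondence between uncertainty-map semantics and the two-dimensional ETS semantics: for any Kripke model M (without uncertainty set), nonempty subsets Γ, Δ of its states, states s ∈ Γ, t ∈ Δ, every EPDL program π and formula φ: (i) (M^Γ, s) ⟦π⟧ (M^Δ, t) if and only if s_Γ →_π t_Δ in the ETS model M^•; and (ii) M^Γ, s ⊨ φ if and only if M^•, s_Γ ⊩ φ. -/

import Mathlib

mutual
/-- Formulas of EPDL. -/
inductive EForm (P A : Type) : Type
  | top : EForm P A
  | atom : P → EForm P A
  | neg : EForm P A → EForm P A
  | and : EForm P A → EForm P A → EForm P A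
  | box : EProg P A → EForm P A → EForm P A
  | know : EForm P A → EForm P A
/-- Programs of EPDL. -/
inductive EProg (P A : Type) : Type
  | act : A → EProg P A
  | test : EForm P A → EProg P A
  | seq : EProg P A → EProg P A → EProg P A
  | choice : EProg P A → EProg P A → EProg P A
  | star : EProg P A → EProg P A
end

namespace EForm
variable {P A : Type}
/-- φ ∨ ψ := ¬(¬φ ∧ ¬ψ) -/
def or (φ ψ : EForm P A) : EForm P A := neg (and (neg φ) (neg ψ))
/-- φ → ψ := ¬φ ∨ ψ -/
def imp (φ ψ : EForm P A) : EForm P A := or (neg φ) ψ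
def iff (φ ψ : EForm P A) : EForm P A := and (imp φ ψ) (imp ψ φ)
/-- ⟨π⟩φ := ¬[π]¬φ -/
def dia (π : EProg P A) (φ : EForm P A) : EForm P A := neg (box π (neg φ))
/-- ⦗π⦘φ := [π]φ ∧ ⟨π⟩φ -/
def bbox (π : EProg P A) (φ : EForm P A) : EForm P A := and (box π φ) (dia π φ)
/-- K̂φ := ¬K¬φ -/
def hatK (φ : EForm P A) : EForm P A := neg (know (neg φ))
end EForm

/-- A Kripke model with labelled relations. -/
structure Kripke (P A : Type) where
  S : Type
  R : A → S → S → Prop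
  V : S → P → Prop

namespace Kripke
variable {P A : Type}
/-- U|^a -/
def img (N : Kripke P A) (a : A) (U : Set N.S) : Set N.S := {t | ∃ u ∈ U, N.R a u t}
/-- Iterated update U|^σ along a sequence of actions. -/
def updU (N : Kripke P A) : Set N.S → List A → Set N.S
  | U, [] => U
  | U, a :: σ => N.updU (N.img a U) σ
end Kripke

mutual
/-- Truth of an EPDL formula at a pointed uncertainty map, represented by the
(fixed) Kripke model `N`, an uncertainty set `U` and a state `s`. -/
def eSat {P A : Type} (N : Kripke P A) : Set N.S → N.S → EForm P A → Prop
  | _, _, .top => True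
  | _, s, .atom p => N.V s p
  | U, s, .neg φ => ¬ eSat N U s φ
  | U, s, .and φ ψ => eSat N U s φ ∧ eSat N U s ψ
  | U, s, .box π φ => ∀ c : Set N.S × N.S, eRel N π (U, s) c → eSat N c.1 c.2 φ
  | U, _, .know φ => ∀ u ∈ U, eSat N U u φ
/-- The relation ⟦π⟧ between pointed uncertainty maps (over a fixed Kripke model
`N`, a pointed uncertainty map is a pair of an uncertainty set and a state). -/
def eRel {P A : Type} (N : Kripke P A) : EProg P A → Set N.S × N.S → Set N.S × N.S → Prop
  | .act a, c, c' => c'.1 = N.img a c.1 ∧ N.R a c.2 c'.2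
  | .test ψ, c, c' => c' = c ∧ eSat N c.1 c.2 ψ
  | .seq π₁ π₂, c, c' => ∃ d, eRel N π₁ c d ∧ eRel N π₂ d c'
  | .choice π₁ π₂, c, c' => eRel N π₁ c c' ∨ eRel N π₂ c c'
  | .star π, c, c' => Relation.ReflTransGen (fun x y => eRel N π x y) c c'
end

/-- Validity: truth at every pointed uncertainty map. -/
def eValid {P A : Type} (φ : EForm P A) : Prop :=
  ∀ (N : Kripke P A) (U : Set N.S), U.Nonempty → ∀ s ∈ U, eSat N U s φ

/-- An epistemic temporal structure: a Kripke model with both action relations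
and an epistemic equivalence relation. -/
structure ETS (P A : Type) where
  S : Type
  R : A → S → S → Prop
  E : S → S → Prop
  equiv : Equivalence E
  V : S → P → Prop

mutual
/-- ETS semantics for EPDL formulas. -/
def etsSat {P A : Type} (M : ETS P A) : M.S → EForm P A → Prop
  | _, .top => True
  | s, .atom p => M.V s p
  | s, .neg φ => ¬ etsSat M s φ
  | s, .and φ ψ => etsSat M s φ ∧ etsSat M s ψ
  | s, .box π φ => ∀ t, etsRel M π s t → etsSat M t φ
  | s, .know φ => ∀ u, M.E s u → etsSat M u φ
/-- ETS interpretation of EPDL programs as relations on states. -/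
def etsRel {P A : Type} (M : ETS P A) : EProg P A → M.S → M.S → Prop
  | .act a, s, t => M.R a s t
  | .test ψ, s, t => s = t ∧ etsSat M s ψ
  | .seq π₁ π₂, s, t => ∃ u, etsRel M π₁ s u ∧ etsRel M π₂ u t
  | .choice π₁ π₂, s, t => etsRel M π₁ s t ∨ etsRel M π₂ s t
  | .star π, s, t => Relation.ReflTransGen (fun x y => etsRel M π x y) s t
end

/-- The ETS model M^• built from a Kripke model: states are pairs s_Γ with
s ∈ Γ, R^•_a relates s_Γ to t_Δ iff s R_a t and Δ = Γ|^a, and s_Γ ∼ t_Δ iff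
Γ = Δ. -/
def Kripke.bullet {P A : Type} (N : Kripke P A) : ETS P A where
  S := {p : N.S × Set N.S // p.1 ∈ p.2}
  R := fun a x y => N.R a x.val.1 y.val.1 ∧ y.val.2 = N.img a x.val.2
  E := fun x y => x.val.2 = y.val.2
  equiv := ⟨fun _ => rfl, fun h => h.symm, fun h₁ h₂ => h₁.trans h₂⟩
  V := fun x p => N.V x.val.1 p

/-!
The map `s_Γ ↦ (N^Γ, s)` is a bijection from the states of `N^•` onto the pointed uncertainty
maps whose point lies in their uncertainty set, and this set is closed under every `⟦π⟧`.
Along this bijection the clauses for actions, tests and `K` of the two semantics agree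
literally, so both statements follow by a simultaneous induction on programs and formulas.
For `π*`, closure under `⟦π⟧` is what lets a `⟦π⟧`-path starting in the image be lifted
step by step to an `→_π`-path in `N^•`.
-/

theorem Relation.ReflTransGen.exists_lift_of_simulation {α β : Type*}
    {r : α → α → Prop} {p : β → β → Prop} (f : β → α)
    (hsim : ∀ b a, r (f b) a → ∃ b', f b' = a ∧ p b b')
    {b : β} {a : α} (h : Relation.ReflTransGen r (f b) a) :
    ∃ b', f b' = a ∧ Relation.ReflTransGen p b b' := by
  induction h with
  | refl => exact ⟨b, rfl, .refl⟩
  | tail _ hstep ih =>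
    obtain ⟨b', rfl, hb'⟩ := ih
    obtain ⟨b'', rfl, hstep'⟩ := hsim b' _ hstep
    exact ⟨b'', rfl, hb'.tail hstep'⟩

namespace Kripke

variable {P A : Type} (N : Kripke P A)

/-- The state `s_Γ` of `N^•`, read as the pointed uncertainty map `(N^Γ, s)`. -/
def pointedMap (x : N.bullet.S) : Set N.S × N.S := (x.1.2, x.1.1)

theorem pointedMap_injective : Function.Injective N.pointedMap := by
  rintro ⟨⟨s, Γ⟩, _⟩ ⟨⟨t, Δ⟩, _⟩ h
  simp only [pointedMap, Prod.mk.injEq] at h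
  obtain ⟨rfl, rfl⟩ := h
  rfl

theorem eRel_snd_mem : ∀ (π : EProg P A) {c c' : Set N.S × N.S},
    eRel N π c c' → c.2 ∈ c.1 → c'.2 ∈ c'.1
  | .act _, c, _, ⟨hU, hR⟩, hc => hU ▸ ⟨c.2, hc, hR⟩
  | .test _, _, _, ⟨hc', _⟩, hc => hc' ▸ hc
  | .seq π₁ π₂, _, _, ⟨_, h₁, h₂⟩, hc =>
    eRel_snd_mem π₂ h₂ (eRel_snd_mem π₁ h₁ hc)
  | .choice π₁ _, _, _, .inl h₁, hc => eRel_snd_mem π₁ h₁ hc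
  | .choice _ π₂, _, _, .inr h₂, hc => eRel_snd_mem π₂ h₂ hc
  | .star π, _, _, h, hc => by
    induction h with
    | refl => exact hc
    | tail _ hstep ih => exact eRel_snd_mem π hstep ih

theorem exists_pointedMap_eq_of_eRel {π : EProg P A} {x : N.bullet.S} {c : Set N.S × N.S}
    (h : eRel N π (N.pointedMap x) c) : ∃ y, N.pointedMap y = c :=
  ⟨⟨(c.2, c.1), N.eRel_snd_mem π h x.2⟩, rfl⟩

mutual

theorem eRel_pointedMap_iff (π : EProg P A) (x y : N.bullet.S) :
    eRel N π (N.pointedMap x) (N.pointedMap y) ↔ etsRel N.bullet π x y :=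
  match π with
  | .act _ => and_comm
  | .test ψ => and_congr (N.pointedMap_injective.eq_iff.trans eq_comm) (eSat_iff_etsSat ψ x)
  | .seq π₁ π₂ => by
    refine ⟨fun ⟨d, h₁, h₂⟩ => ?_, fun ⟨u, h₁, h₂⟩ =>
      ⟨_, (eRel_pointedMap_iff π₁ x u).2 h₁, (eRel_pointedMap_iff π₂ u y).2 h₂⟩⟩
    obtain ⟨u, rfl⟩ := N.exists_pointedMap_eq_of_eRel h₁
    exact ⟨u, (eRel_pointedMap_iff π₁ x u).1 h₁, (eRel_pointedMap_iff π₂ u y).1 h₂⟩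
  | .choice π₁ π₂ => or_congr (eRel_pointedMap_iff π₁ x y) (eRel_pointedMap_iff π₂ x y)
  | .star π => by
    refine ⟨fun h => ?_, fun h =>
      Relation.ReflTransGen.lift N.pointedMap (fun u v => (eRel_pointedMap_iff π u v).2) x y h⟩
    have hsim (u : N.bullet.S) (c) (hc : eRel N π (N.pointedMap u) c) :
        ∃ v, N.pointedMap v = c ∧ etsRel N.bullet π u v := by
      obtain ⟨v, rfl⟩ := N.exists_pointedMap_eq_of_eRel hc
      exact ⟨v, rfl, (eRel_pointedMap_iff π u v).1 hc⟩
    obtain ⟨y', hy', h'⟩ := Relation.ReflTransGen.exists_lift_of_simulation _ hsim h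
    rwa [← N.pointedMap_injective hy']

theorem eSat_iff_etsSat (φ : EForm P A) (x : N.bullet.S) :
    eSat N x.1.2 x.1.1 φ ↔ etsSat N.bullet x φ :=
  match φ with
  | .top => Iff.rfl
  | .atom _ => Iff.rfl
  | .neg φ => not_congr (eSat_iff_etsSat φ x)
  | .and φ ψ => and_congr (eSat_iff_etsSat φ x) (eSat_iff_etsSat ψ x)
  | .box π φ => by
    refine ⟨fun h y hy => (eSat_iff_etsSat φ y).1 (h _ ((eRel_pointedMap_iff π x y).2 hy)),
      fun h c hc => ?_⟩
    obtain ⟨y, rfl⟩ := N.exists_pointedMap_eq_of_eRel hc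
    exact (eSat_iff_etsSat φ y).2 (h y ((eRel_pointedMap_iff π x y).1 hc))
  | .know φ => by
    refine ⟨fun h => ?_, fun h u hu => (eSat_iff_etsSat φ ⟨(u, x.1.2), hu⟩).2 (h _ rfl)⟩
    rintro ⟨⟨u, U⟩, hu⟩ (rfl : x.1.2 = U)
    exact (eSat_iff_etsSat φ _).1 (h u hu)

end

end Kripke

/-- Correspondence between the uncertainty-map semantics and the
two-dimensional ETS semantics: for any Kripke model N, nonempty subsets Γ, Δ of
its states, states s ∈ Γ, t ∈ Δ, every EPDL program π and formula φ:
(i) (N^Γ, s) ⟦π⟧ (N^Δ, t) iff s_Γ →_π t_Δ in the ETS model N^•; and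
(ii) N^Γ, s ⊨ φ iff N^•, s_Γ ⊩ φ. -/
theorem ets_correspondence {P A : Type} [Countable P] [Countable A] (N : Kripke P A) :
    (∀ (π : EProg P A) (Γ Δ : Set N.S) (s t : N.S) (hs : s ∈ Γ) (ht : t ∈ Δ),
        eRel N π (Γ, s) (Δ, t) ↔ etsRel N.bullet π ⟨(s, Γ), hs⟩ ⟨(t, Δ), ht⟩) ∧
    (∀ (φ : EForm P A) (Γ : Set N.S) (s : N.S) (hs : s ∈ Γ),
        eSat N Γ s φ ↔ etsSat N.bullet ⟨(s, Γ), hs⟩ φ) :=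
  ⟨fun π Γ Δ s t hs ht => N.eRel_pointedMap_iff π ⟨(s, Γ), hs⟩ ⟨(t, Δ), ht⟩,
    fun φ Γ s hs => N.eSat_iff_etsSat φ ⟨(s, Γ), hs⟩⟩
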